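/- Let K ⊆ Stoch(A,A') and M ⊆ Stoch(B,B') be convex. Then every locally-applicable transformation S : K → M on Stoch is convex linear: for every X, X', every φ₀, φ₁ ∈ dExt_{X,X'}(K) and every p ∈ [0,1], S_{X,X'}(p·φ₀ + (1-p)·φ₁) = p·S_{X,X'}(φ₀) + (1-p)·S_{X,X'}(φ₁). -/

import Mathlib

noncomputable section
open scoped Kronecker
attribute [local instance] Classical.propDecidable
attribute [local instance] FintypeCat.fintype

/-- Entrywise nonnegativity: a morphism of `Mat[ℝ₊]`. -/
def Nonneg {m n : Type} (f : Matrix m n ℝ) : Prop := ∀ i j, 0 ≤ f i j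

/-- A column-stochastic matrix: a morphism of `Stoch`. -/
def IsStoch {m n : Type} [Fintype m] (f : Matrix m n ℝ) : Prop :=
  Nonneg f ∧ ∀ j, ∑ i, f i j = 1

/-- A probability vector. -/
def IsProb {X : Type} [Fintype X] (ρ : X → ℝ) : Prop :=
  (∀ x, 0 ≤ ρ x) ∧ ∑ x, ρ x = 1

/-- Reduction of an extended map by a (generalised) state `ρ` on the input ancilla and a
(generalised) effect `σ` on the output ancilla. -/
def margE {A A' X X' : Type} [Fintype X] [Fintype X'] (Φ : Matrix (A' × X') (A × X) ℝ)
    (ρ : X → ℝ) (σ : X' → ℝ) : Matrix A' A ℝ :=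
  Matrix.of fun a' a => ∑ x' : X', ∑ x : X, σ x' * Φ (a', x') (a, x) * ρ x

/-- Reduction by a state on the input ancilla and the discard on the output ancilla. -/
def marg {A A' X X' : Type} [Fintype X] [Fintype X'] (Φ : Matrix (A' × X') (A × X) ℝ)
    (ρ : X → ℝ) : Matrix A' A ℝ :=
  margE Φ ρ (fun _ => 1)

/-- The dilation extension of a set `K ⊆ Stoch(A,A')` by ancillas `X, X'`. -/
def dExtS {A A' : Type} [Fintype A'] (K : Set (Matrix A' A ℝ))
    (X X' : Type) [Fintype X] [Fintype X'] : Set (Matrix (A' × X') (A × X) ℝ) :=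
  {Φ | IsStoch Φ ∧ ∀ ρ : X → ℝ, IsProb ρ → marg Φ ρ ∈ K}

/-- Closure under convex combinations. -/
def IsConvexSetS {A A' : Type} (K : Set (Matrix A' A ℝ)) : Prop :=
  ∀ φ₀ ∈ K, ∀ φ₁ ∈ K, ∀ p : ℝ, 0 ≤ p → p ≤ 1 → (p • φ₀ + (1 - p) • φ₁) ∈ K

/-- A normal set: one containing every discard-prepare map. -/
def IsNormalSetS {A A' : Type} [Fintype A'] (K : Set (Matrix A' A ℝ)) : Prop :=
  ∀ ρ : A' → ℝ, IsProb ρ → (Matrix.of fun a' (_ : A) => ρ a') ∈ K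

/-- `(id_{A'} ⊗ g) · (Φ ⊗ id_Z) · (id_A ⊗ f)`, suppressing associativity isomorphisms. -/
def slideS {A A' X X' Y Y' Z : Type} [Fintype A] [Fintype A'] [Fintype X] [Fintype X']
    [Fintype Y] [Fintype Y'] [Fintype Z]
    (f : Matrix (X × Z) Y ℝ) (g : Matrix Y' (X' × Z) ℝ)
    (Φ : Matrix (A' × X') (A × X) ℝ) : Matrix (A' × Y') (A × Y) ℝ :=
  ((1 : Matrix A' A' ℝ) ⊗ₖ g) *
    (Matrix.reindex (Equiv.prodAssoc A' X' Z) (Equiv.prodAssoc A X Z)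
      (Φ ⊗ₖ (1 : Matrix Z Z ℝ))) *
    ((1 : Matrix A A ℝ) ⊗ₖ f)

/-- A locally-applicable transformation of type `K → M` on `Stoch`. -/
structure LocAppS {A A' B B' : Type} [Fintype A] [Fintype A'] [Fintype B] [Fintype B']
    (K : Set (Matrix A' A ℝ)) (M : Set (Matrix B' B ℝ)) where
  app : ∀ (X X' : FintypeCat.{0}), ↥(dExtS K X X') → ↥(dExtS M X X')
  natural : ∀ (X X' Y Y' Z : FintypeCat.{0})
      (f : Matrix (X × Z) Y ℝ) (g : Matrix Y' (X' × Z) ℝ),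
      IsStoch f → IsStoch g →
      ∀ (Φ : ↥(dExtS K X X')) (h : slideS f g Φ.1 ∈ dExtS K Y Y'),
        (app Y Y' ⟨slideS f g Φ.1, h⟩).1 = slideS f g (app X X' Φ).1

/-- Reduction of a doubly-extended map by a state on the control ancilla and the discard
on its output. -/
def margCtrl {A A' X X' Y Y' : Type} [Fintype Y] [Fintype Y']
    (Φ : Matrix (A' × (X' × Y')) (A × (X × Y)) ℝ) (ρ : Y → ℝ) :
    Matrix (A' × X') (A × X) ℝ :=
  Matrix.of fun p q => ∑ y' : Y', ∑ y : Y, Φ (p.1, (p.2, y')) (q.1, (q.2, y)) * ρ y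

/-- A set `K ⊆ Stoch(A,A')` has control if any two members of a common dilation extension
arise as reductions of a single member by a pair of probability vectors. -/
def HasControlS {A A' : Type} [Fintype A] [Fintype A'] (K : Set (Matrix A' A ℝ)) : Prop :=
  ∀ (X X' : FintypeCat.{0}), ∀ φ₀ ∈ dExtS K X X', ∀ φ₁ ∈ dExtS K X X',
    ∃ (Y Y' : FintypeCat.{0}) (Φ : Matrix (A' × (X' × Y')) (A × (X × Y)) ℝ)
      (ρ₀ ρ₁ : Y → ℝ),
      Φ ∈ dExtS K (X × Y) (X' × Y') ∧ IsProb ρ₀ ∧ IsProb ρ₁ ∧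
      margCtrl Φ ρ₀ = φ₀ ∧ margCtrl Φ ρ₁ = φ₁

/-- The action of a `Mat[ℝ₊]`-supermap `S` (acting on vectorizations) on an extended
morphism, by tensor extension with the identity via the compact structure. -/
def supActS {A A' B B' X X' : Type} [Fintype A] [Fintype A']
    (S : Matrix (B × B') (A × A') ℝ) (Φ : Matrix (A' × X') (A × X) ℝ) :
    Matrix (B' × X') (B × X) ℝ :=
  Matrix.of fun p q => ∑ a : A, ∑ a' : A', S (q.1, p.1) (a, a') * Φ (a', p.2) (a, q.2)

/-- A `Mat[ℝ₊]`-supermap of type `K → M` on `Stoch`. -/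
def IsSupermapS {A A' B B' : Type} [Fintype A] [Fintype A'] [Fintype B']
    (K : Set (Matrix A' A ℝ)) (M : Set (Matrix B' B ℝ))
    (S : Matrix (B × B') (A × A') ℝ) : Prop :=
  Nonneg S ∧ ∀ (X X' : FintypeCat.{0}), ∀ Φ ∈ dExtS K X X', supActS S Φ ∈ dExtS M X X'

/-!
Given `Φ₀, Φ₁` in the dilation extension, the controlled map that applies `Φ_b` when a classical
control bit reads `b` lies in the dilation extension with ancillas `X × Bool`, `X' × Bool`; this
is where the convexity of `K` enters. Preparing the control bit in the state `(p, 1 - p)` and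
discarding it afterwards is a local operation on the ancillas which turns the controlled map into
`p • Φ₀ + (1 - p) • Φ₁`. By local applicability, `S` of the mixture is therefore the same local
operation applied to `S` of the controlled map, and that depends affinely on `(p, 1 - p)`.
-/

theorem exists_isProb_eq_smul {X : Type} [Fintype X] [Nonempty X] {w : X → ℝ} (hw : 0 ≤ w) :
    ∃ ρ : X → ℝ, IsProb ρ ∧ w = (∑ x, w x) • ρ := by
  by_cases hzero : ∑ x, w x = 0
  · refine ⟨fun _ => (Fintype.card X : ℝ)⁻¹, ⟨fun _ => by positivity, by simp⟩, ?_⟩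
    rw [hzero, zero_smul]
    exact (Fintype.sum_eq_zero_iff_of_nonneg hw).mp hzero
  · refine ⟨(∑ x, w x)⁻¹ • w, ⟨fun x => ?_, ?_⟩, ?_⟩
    · exact smul_nonneg (inv_nonneg.mpr (Fintype.sum_nonneg hw)) (hw x)
    · simp [← Finset.mul_sum, inv_mul_cancel₀ hzero]
    · rw [smul_smul, mul_inv_cancel₀ hzero, one_smul]

theorem marg_smul {A A' X X' : Type} [Fintype X] [Fintype X'] (Φ : Matrix (A' × X') (A × X) ℝ)
    (c : ℝ) (ρ : X → ℝ) : marg Φ (c • ρ) = c • marg Φ ρ := by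
  ext a' a
  simp only [marg, margE, Matrix.of_apply, Matrix.smul_apply, Pi.smul_apply, smul_eq_mul,
    Finset.mul_sum, one_mul]
  simp only [mul_left_comm c]

theorem exists_mem_marg_eq_smul {A A' X X' : Type} [Fintype A'] [Fintype X] [Fintype X']
    [Nonempty X] {K : Set (Matrix A' A ℝ)} {Φ : Matrix (A' × X') (A × X) ℝ}
    (hΦ : Φ ∈ dExtS K X X') {w : X → ℝ} (hw : 0 ≤ w) :
    ∃ φ ∈ K, marg Φ w = (∑ x, w x) • φ := by
  obtain ⟨ρ, hρ, hwρ⟩ := exists_isProb_eq_smul hw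
  exact ⟨marg Φ ρ, hΦ.2 ρ hρ, by rw [hwρ, marg_smul, ← hwρ]⟩

section Control

variable {A A' X X' : Type}

def prepareControl (ρ : Bool → ℝ) : Matrix ((X × Bool) × Unit) X ℝ :=
  Matrix.of fun p x => if p.1.1 = x then ρ p.1.2 else 0

def discardControl : Matrix X' ((X' × Bool) × Unit) ℝ :=
  Matrix.of fun x' q => if x' = q.1.1 then 1 else 0

def controlled (Φ₀ Φ₁ : Matrix (A' × X') (A × X) ℝ) :
    Matrix (A' × (X' × Bool)) (A × (X × Bool)) ℝ :=
  Matrix.of fun p q =>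
    if p.2.2 = q.2.2 then (bif q.2.2 then Φ₁ else Φ₀) (p.1, p.2.1) (q.1, q.2.1) else 0

theorem isStoch_prepareControl [Fintype X] {ρ : Bool → ℝ} (hρ : IsProb ρ) :
    IsStoch (prepareControl (X := X) ρ) := by
  refine ⟨fun p x => ?_, fun x => ?_⟩
  · simp only [prepareControl, Matrix.of_apply]
    split_ifs
    exacts [hρ.1 _, le_rfl]
  · simpa [prepareControl, Fintype.sum_prod_type, Fintype.sum_bool] using hρ.2

theorem isStoch_discardControl [Fintype X'] : IsStoch (discardControl (X' := X')) :=
  ⟨fun _ _ => by simp only [discardControl, Matrix.of_apply]; split_ifs <;> norm_num,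
    fun _ => by simp [discardControl]⟩

theorem slideS_prepareControl_discardControl [Fintype A] [Fintype A'] [Fintype X] [Fintype X']
    (ρ : Bool → ℝ) (Ψ : Matrix (A' × (X' × Bool)) (A × (X × Bool)) ℝ) :
    slideS (prepareControl ρ) discardControl Ψ = margCtrl Ψ ρ := by
  ext ⟨a', x'⟩ ⟨a, x⟩
  simp only [slideS, Matrix.mul_apply, Matrix.kroneckerMap_apply, Matrix.reindex_apply,
    Matrix.submatrix_apply, Equiv.prodAssoc_symm_apply, Matrix.one_apply, prepareControl,
    discardControl, margCtrl, Matrix.of_apply, Fintype.sum_prod_type]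
  simp [mul_comm]
  ring

theorem margCtrl_controlled (Φ₀ Φ₁ : Matrix (A' × X') (A × X) ℝ) (ρ : Bool → ℝ) :
    margCtrl (controlled Φ₀ Φ₁) ρ = ρ false • Φ₀ + ρ true • Φ₁ := by
  ext ⟨a', x'⟩ ⟨a, x⟩
  simp [margCtrl, controlled, mul_comm, add_comm]

theorem isStoch_controlled [Fintype A'] [Fintype X'] {Φ₀ Φ₁ : Matrix (A' × X') (A × X) ℝ}
    (h₀ : IsStoch Φ₀) (h₁ : IsStoch Φ₁) : IsStoch (controlled Φ₀ Φ₁) := by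
  refine ⟨fun p q => ?_, fun ⟨a, x, b⟩ => ?_⟩
  · simp only [controlled, Matrix.of_apply]
    split_ifs
    · cases q.2.2
      exacts [h₀.1 _ _, h₁.1 _ _]
    · exact le_rfl
  · cases b
    · simpa [controlled, Fintype.sum_prod_type] using h₀.2 (a, x)
    · simpa [controlled, Fintype.sum_prod_type] using h₁.2 (a, x)

theorem marg_controlled [Fintype X] [Fintype X'] (Φ₀ Φ₁ : Matrix (A' × X') (A × X) ℝ)
    (ρ : X × Bool → ℝ) :
    marg (controlled Φ₀ Φ₁) ρ =
      marg Φ₀ (fun x => ρ (x, false)) + marg Φ₁ (fun x => ρ (x, true)) := by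
  ext a' a
  simp [marg, margE, controlled, Fintype.sum_prod_type, Finset.sum_add_distrib, add_comm]

theorem controlled_mem_dExtS [Fintype A'] [Fintype X] [Fintype X'] {K : Set (Matrix A' A ℝ)}
    (hK : IsConvexSetS K) {Φ₀ Φ₁ : Matrix (A' × X') (A × X) ℝ} (h₀ : Φ₀ ∈ dExtS K X X')
    (h₁ : Φ₁ ∈ dExtS K X X') : controlled Φ₀ Φ₁ ∈ dExtS K (X × Bool) (X' × Bool) := by
  refine ⟨isStoch_controlled h₀.1 h₁.1, fun ρ hρ => ?_⟩
  have : Nonempty X := by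
    by_contra hX
    simpa [not_nonempty_iff.mp hX] using hρ.2
  obtain ⟨φ₀, hφ₀, hmarg₀⟩ :=
    exists_mem_marg_eq_smul h₀ (w := fun x => ρ (x, false)) (fun _ => hρ.1 _)
  obtain ⟨φ₁, hφ₁, hmarg₁⟩ :=
    exists_mem_marg_eq_smul h₁ (w := fun x => ρ (x, true)) (fun _ => hρ.1 _)
  have hweights : ∑ x, ρ (x, true) = 1 - ∑ x, ρ (x, false) := by
    rw [← hρ.2, Fintype.sum_prod_type, ← Finset.sum_sub_distrib]
    simp
  rw [marg_controlled, hmarg₀, hmarg₁, hweights]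
  refine hK φ₀ hφ₀ φ₁ hφ₁ _ (Fintype.sum_nonneg fun _ => hρ.1 _) ?_
  linarith [Finset.sum_nonneg fun x (_ : x ∈ Finset.univ) => hρ.1 (x, true)]

end Control

theorem margCtrl_add {A A' X X' Y Y' : Type} [Fintype Y] [Fintype Y']
    (Ψ : Matrix (A' × (X' × Y')) (A × (X × Y)) ℝ) (ρ σ : Y → ℝ) :
    margCtrl Ψ (ρ + σ) = margCtrl Ψ ρ + margCtrl Ψ σ := by
  ext
  simp [margCtrl, mul_add, Finset.sum_add_distrib]

theorem margCtrl_smul {A A' X X' Y Y' : Type} [Fintype Y] [Fintype Y']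
    (Ψ : Matrix (A' × (X' × Y')) (A × (X × Y)) ℝ) (c : ℝ) (ρ : Y → ℝ) :
    margCtrl Ψ (c • ρ) = c • margCtrl Ψ ρ := by
  ext
  simp [margCtrl, Finset.mul_sum, mul_left_comm c]

theorem LocAppS.exists_margCtrl_eq_app {A A' B B' : Type} [Fintype A] [Fintype A']
    [Fintype B] [Fintype B'] {K : Set (Matrix A' A ℝ)} {M : Set (Matrix B' B ℝ)}
    (S : LocAppS K M) (hK : IsConvexSetS K) {X X' : FintypeCat.{0}} (Φ₀ Φ₁ : dExtS K X X') :
    ∃ Ψ : Matrix (B' × (X' × Bool)) (B × (X × Bool)) ℝ, ∀ ρ : Bool → ℝ, IsProb ρ →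
      ∀ Φ : dExtS K X X', Φ.1 = ρ false • Φ₀.1 + ρ true • Φ₁.1 →
        (S.app X X' Φ).1 = margCtrl Ψ ρ := by
  -- The instance on `FintypeCat.of (X × Bool)` is `Fintype.ofFinite`, not the product instance;
  -- the `convert`s identify the two.
  have hctrl := controlled_mem_dExtS hK Φ₀.2 Φ₁.2
  refine ⟨(S.app (.of (X × Bool)) (.of (X' × Bool)) ⟨controlled Φ₀.1 Φ₁.1, by convert hctrl⟩).1,
    fun ρ hρ Φ hΦ => ?_⟩
  have hslide : slideS (prepareControl ρ) discardControl (controlled Φ₀.1 Φ₁.1) = Φ.1 := by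
    rw [slideS_prepareControl_discardControl, margCtrl_controlled, hΦ]
  rw [← slideS_prepareControl_discardControl]
  convert S.natural (.of (X × Bool)) (.of (X' × Bool)) X X' (.of Unit) (prepareControl ρ)
    discardControl (by convert isStoch_prepareControl (X := X) hρ)
    (by convert isStoch_discardControl)
    ⟨controlled Φ₀.1 Φ₁.1, by convert hctrl⟩ (by convert Φ.2; convert hslide)
  convert hslide.symm

theorem stoch_locApp_convex_linear_general (A A' B B' : FintypeCat.{0})
    (K : Set (Matrix A' A ℝ)) (M : Set (Matrix B' B ℝ))
    (hKconv : IsConvexSetS K)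
    (S : LocAppS K M) (X X' : FintypeCat.{0})
    (Φ₀ Φ₁ : ↥(dExtS K X X')) (p : ℝ) (hp0 : 0 ≤ p) (hp1 : p ≤ 1)
    (h : p • Φ₀.1 + (1 - p) • Φ₁.1 ∈ dExtS K X X') :
    (S.app X X' ⟨p • Φ₀.1 + (1 - p) • Φ₁.1, h⟩).1 =
      p • (S.app X X' Φ₀).1 + (1 - p) • (S.app X X' Φ₁).1 := by
  obtain ⟨Ψ, hΨ⟩ := S.exists_margCtrl_eq_app hKconv Φ₀ Φ₁
  let δ (b : Bool) : Bool → ℝ := Pi.single b 1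
  have hδ (b : Bool) : IsProb (δ b) :=
    ⟨fun c => by cases b <;> cases c <;> simp [δ], by cases b <;> simp [δ]⟩
  have hmix : IsProb (p • δ false + (1 - p) • δ true) :=
    ⟨fun c => by cases c <;> simp [δ] <;> linarith, by simp [δ]⟩
  rw [hΨ _ hmix _ (by simp [δ]), hΨ _ (hδ false) Φ₀ (by simp [δ]),
    hΨ _ (hδ true) Φ₁ (by simp [δ]), margCtrl_add, margCtrl_smul, margCtrl_smul]

/-- **Statement 13.** Every locally-applicable transformation between convex sets of
column-stochastic matrices is convex linear. -/
theorem stoch_locApp_convex_linear (A A' B B' : FintypeCat.{0})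
    (K : Set (Matrix A' A ℝ)) (M : Set (Matrix B' B ℝ))
    (hK : ∀ φ ∈ K, IsStoch φ) (hM : ∀ φ ∈ M, IsStoch φ)
    (hKconv : IsConvexSetS K) (hMconv : IsConvexSetS M)
    (S : LocAppS K M) (X X' : FintypeCat.{0})
    (Φ₀ Φ₁ : ↥(dExtS K X X')) (p : ℝ) (hp0 : 0 ≤ p) (hp1 : p ≤ 1)
    (h : p • Φ₀.1 + (1 - p) • Φ₁.1 ∈ dExtS K X X') :
    (S.app X X' ⟨p • Φ₀.1 + (1 - p) • Φ₁.1, h⟩).1 =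
      p • (S.app X X' Φ₀).1 + (1 - p) • (S.app X X' Φ₁).1 :=
  stoch_locApp_convex_linear_general A A' B B' K M hKconv S X X' Φ₀ Φ₁ p hp0 hp1 h
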